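/- Let i, j ∈ 𝓛 be distinct, let δa_i, δa_j ∈ ℝ^q, and let v ∈ ℝ² satisfy φ(v) = 0 and φ_i(v,a_i) = φ_j(v,a_j). Let d := det of the 2×2 matrix whose rows are (∇_xφ_i(v,a_i) − ∇_xφ_j(v,a_j))ᵀ and ∇φ(v)ᵀ, and assume d ≠ 0. Then there exist τ₁ > 0 and a unique smooth function z_v : [0,τ₁] → ℝ² with z_v(0) = v such that φ(z_v(t)) = 0 and φ_i(z_v(t), a_i + tδa_i) = φ_j(z_v(t), a_j + tδa_j) for all t ∈ [0,τ₁]; moreover z_v′(0) = 𝓜_v(j,i)δa_i + 𝓜_v(i,j)δa_j, where 𝓜_v(j,i) := (1/d) · ∇φ(v)^⊥ ⊗ ∇_{a_i}φ_i(v,a_i)ᵀ and 𝓜_v(i,j) := −(1/d) · ∇φ(v)^⊥ ⊗ ∇_{a_j}φ_j(v,a_j)ᵀ. -/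

import Mathlib

open Set Metric
open scoped ENNReal NNReal

noncomputable section

/-- The plane ℝ². -/
abbrev Plane : Type := EuclideanSpace ℝ (Fin 2)

/-- The site space ℝ^q. -/
abbrev Sites (q : ℕ) : Type := EuclideanSpace ℝ (Fin q)

/-- Rotation by π/2: `(v₁,v₂)^⊥ = (−v₂,v₁)`. -/
def perp (w : Plane) : Plane := (WithLp.equiv 2 (Fin 2 → ℝ)).symm ![-(w 1), w 0]

/-- Gradient of `φ(x,a)` with respect to the spatial variable `x ∈ ℝ²`. -/
def gradX {q : ℕ} (f : Plane → Sites q → ℝ) (x : Plane) (b : Sites q) : Plane :=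
  gradient (fun y => f y b) x

/-- Gradient of `φ(x,a)` with respect to the site variable `a ∈ ℝ^q`. -/
def gradA {q : ℕ} (f : Plane → Sites q → ℝ) (x : Plane) (b : Sites q) : Sites q :=
  gradient (fun c => f x c) b

/-- The cell `V_i(a) = int {x ∈ A : φ_i(x,a_i) = min_k φ_k(x,a_k)}` of the
minimization diagram, with `A = {φ₀ < 0}`. -/
def cellMD {κ q : ℕ} (φ : Fin κ → Plane → Sites q → ℝ) (φ₀ : Plane → ℝ)
    (a : Fin κ → Sites q) (i : Fin κ) : Set Plane :=
  interior {x | φ₀ x < 0 ∧ ∀ k, φ i x (a i) ≤ φ k x (a k)}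

section AuxIFT
open ContinuousLinearMap

lemma inner_gradient {F : Type*} [NormedAddCommGroup F] [InnerProductSpace ℝ F] [CompleteSpace F]
    (f : F → ℝ) (x u : F) : (inner ℝ (gradient f x) u : ℝ) = fderiv ℝ f x u := by
  rw [gradient, ← InnerProductSpace.toDual_apply_apply, LinearIsometryEquiv.apply_symm_apply]

lemma plane_ext {x y : Plane} (h0 : x 0 = y 0) (h1 : x 1 = y 1) : x = y := by
  ext k; fin_cases k <;> assumption

lemma inner_plane (g u : Plane) : (inner ℝ g u : ℝ) = g 0 * u 0 + g 1 * u 1 := by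
  simp [PiLp.inner_apply, Fin.sum_univ_two, RCLike.inner_apply, mul_comm]

def myLG (g0 g : Plane) (c : ℝ) : (ℝ × Plane) →L[ℝ] ℝ × (ℝ × ℝ) :=
  (fst ℝ ℝ Plane).prod
    (((innerSL ℝ g0).comp (snd ℝ ℝ Plane)).prod
      (((innerSL ℝ g).comp (snd ℝ ℝ Plane)) + (fst ℝ ℝ Plane).smulRight c))

lemma myLG_apply (g0 g : Plane) (c : ℝ) (p : ℝ × Plane) :
    myLG g0 g c p = (p.1, ((inner ℝ g0 p.2 : ℝ), (inner ℝ g p.2 : ℝ) + p.1 * c)) := by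
  simp [myLG, smul_eq_mul]

def myLGinv (g0 g : Plane) (c d : ℝ) : (ℝ × (ℝ × ℝ)) →L[ℝ] ℝ × Plane :=
  (fst ℝ ℝ (ℝ × ℝ)).prod
    ((EuclideanSpace.equiv (Fin 2) ℝ).symm.toContinuousLinearMap.comp
      (ContinuousLinearMap.pi ![
        (g0 1 / d) • (((snd ℝ ℝ ℝ).comp (snd ℝ ℝ (ℝ × ℝ))) - c • (fst ℝ ℝ (ℝ × ℝ)))
          - (g 1 / d) • ((fst ℝ ℝ ℝ).comp (snd ℝ ℝ (ℝ × ℝ))),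
        (g 0 / d) • ((fst ℝ ℝ ℝ).comp (snd ℝ ℝ (ℝ × ℝ)))
          - (g0 0 / d) • (((snd ℝ ℝ ℝ).comp (snd ℝ ℝ (ℝ × ℝ))) - c • (fst ℝ ℝ (ℝ × ℝ)))]))

lemma myLGinv_apply (g0 g : Plane) (c d : ℝ) (y : ℝ × (ℝ × ℝ)) :
    myLGinv g0 g c d y = (y.1,
      (WithLp.equiv 2 (Fin 2 → ℝ)).symm
        ![(g0 1 / d) * (y.2.2 - c * y.1) - (g 1 / d) * y.2.1,
          (g 0 / d) * y.2.1 - (g0 0 / d) * (y.2.2 - c * y.1)]) := by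
  refine Prod.ext (by simp [myLGinv]) (plane_ext ?_ ?_) <;>
    simp [myLGinv, smul_eq_mul, Matrix.cons_val_zero, Matrix.cons_val_one]

lemma myLG_leftInverse (g0 g : Plane) (c d : ℝ) (hd : d = g 0 * g0 1 - g 1 * g0 0)
    (hdne : d ≠ 0) : Function.LeftInverse (myLGinv g0 g c d) (myLG g0 g c) := by
  intro x
  rw [myLG_apply, myLGinv_apply]
  refine Prod.ext rfl (plane_ext ?_ ?_) <;>
    · simp [inner_plane]
      field_simp
      subst hd
      ring

lemma myLG_rightInverse (g0 g : Plane) (c d : ℝ) (hd : d = g 0 * g0 1 - g 1 * g0 0)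
    (hdne : d ≠ 0) : Function.RightInverse (myLGinv g0 g c d) (myLG g0 g c) := by
  intro y
  rw [myLGinv_apply, myLG_apply]
  refine Prod.ext rfl (Prod.ext ?_ ?_) <;>
    · simp [inner_plane]
      field_simp
      subst hd
      ring

lemma hasFDerivAt_part {q : ℕ} (f : Plane → Sites q → ℝ)
    (hf : ContDiff ℝ (⊤ : ℕ∞) (fun p : Plane × Sites q => f p.1 p.2))
    (a1 δ1 : Sites q) (v : Plane) :
    HasFDerivAt (fun p : ℝ × Plane => f p.2 (a1 + p.1 • δ1))
      (((innerSL ℝ (gradX f v a1)).comp (snd ℝ ℝ Plane))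
        + (fst ℝ ℝ Plane).smulRight ((inner ℝ (gradA f v a1) δ1 : ℝ))) (0, v) := by
  set D := fderiv ℝ (fun p : Plane × Sites q => f p.1 p.2) (v, a1) with hDdef
  have hD : HasFDerivAt (fun p : Plane × Sites q => f p.1 p.2) D (v, a1) :=
    ((hf.differentiable (by simp)) (v, a1)).hasFDerivAt
  have hgX : ∀ u : Plane, (inner ℝ (gradX f v a1) u : ℝ) = D (u, 0) := by
    intro u
    have hx : HasFDerivAt (fun y : Plane => f y a1)
        (D.comp ((ContinuousLinearMap.id ℝ Plane).prod 0)) v := by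
      have := hD.comp (x := v) ((hasFDerivAt_id (𝕜 := ℝ) v).prodMk (hasFDerivAt_const a1 v))
      simpa [Function.comp_def] using this
    rw [gradX, inner_gradient, hx.fderiv]
    simp
  have hgA : ∀ w : Sites q, (inner ℝ (gradA f v a1) w : ℝ) = D (0, w) := by
    intro w
    have hx : HasFDerivAt (fun b : Sites q => f v b)
        (D.comp ((0 : Sites q →L[ℝ] Plane).prod (ContinuousLinearMap.id ℝ (Sites q)))) a1 := by
      have := hD.comp (x := a1) ((hasFDerivAt_const v a1).prodMk (hasFDerivAt_id a1))
      simpa [Function.comp_def] using this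
    rw [gradA, inner_gradient, hx.fderiv]
    simp
  have hinner : HasFDerivAt (fun p : ℝ × Plane => ((p.2, a1 + p.1 • δ1) : Plane × Sites q))
      ((snd ℝ ℝ Plane).prod ((fst ℝ ℝ Plane).smulRight δ1)) (0, v) :=
    hasFDerivAt_snd.prodMk ((hasFDerivAt_fst.smul_const δ1).const_add a1)
  have hD' : HasFDerivAt (fun p : Plane × Sites q => f p.1 p.2) D
      ((fun p : ℝ × Plane => ((p.2, a1 + p.1 • δ1) : Plane × Sites q)) (0, v)) := by
    simpa using hD
  have hcomp := hD'.comp (x := (0, v)) hinner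
  have heq : D.comp ((snd ℝ ℝ Plane).prod ((fst ℝ ℝ Plane).smulRight δ1)) =
      ((innerSL ℝ (gradX f v a1)).comp (snd ℝ ℝ Plane))
        + (fst ℝ ℝ Plane).smulRight ((inner ℝ (gradA f v a1) δ1 : ℝ)) := by
    refine ContinuousLinearMap.ext fun p => ?_
    have : ((p.2, p.1 • δ1) : Plane × Sites q) = (p.2, 0) + p.1 • ((0 : Plane), δ1) := by
      simp [Prod.ext_iff]
    simp only [ContinuousLinearMap.comp_apply, ContinuousLinearMap.prod_apply,
      ContinuousLinearMap.coe_fst', ContinuousLinearMap.coe_snd',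
      ContinuousLinearMap.smulRight_apply, ContinuousLinearMap.add_apply, innerSL_apply_apply]
    rw [this, map_add, map_smul, hgX, hgA]
  rw [heq] at hcomp
  simpa [Function.comp_def] using hcomp

lemma hasFDerivAt_bigG {q : ℕ} (f1 f2 : Plane → Sites q → ℝ)
    (hf1 : ContDiff ℝ (⊤ : ℕ∞) (fun p : Plane × Sites q => f1 p.1 p.2))
    (hf2 : ContDiff ℝ (⊤ : ℕ∞) (fun p : Plane × Sites q => f2 p.1 p.2))
    (φ₀ : Plane → ℝ) (hφ₀ : ContDiff ℝ (⊤ : ℕ∞) φ₀)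
    (a1 a2 δ1 δ2 : Sites q) (v : Plane) :
    HasFDerivAt (fun p : ℝ × Plane =>
        (p.1, (φ₀ p.2, f1 p.2 (a1 + p.1 • δ1) - f2 p.2 (a2 + p.1 • δ2))))
      (myLG (gradient φ₀ v) (gradX f1 v a1 - gradX f2 v a2)
        ((inner ℝ (gradA f1 v a1) δ1 : ℝ) - (inner ℝ (gradA f2 v a2) δ2 : ℝ))) (0, v) := by
  have h0 : HasFDerivAt (fun p : ℝ × Plane => φ₀ p.2)
      ((innerSL ℝ (gradient φ₀ v)).comp (snd ℝ ℝ Plane)) (0, v) := by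
    have hD : HasFDerivAt φ₀ (fderiv ℝ φ₀ v) v :=
      ((hφ₀.differentiable (by simp)) v).hasFDerivAt
    have := hD.comp (x := (0, v)) (hasFDerivAt_snd (𝕜 := ℝ) (p := ((0:ℝ), v)))
    have heq : (innerSL ℝ (gradient φ₀ v)).comp (snd ℝ ℝ Plane) =
        (fderiv ℝ φ₀ v).comp (snd ℝ ℝ Plane) := by
      refine ContinuousLinearMap.ext fun p => ?_
      simp only [ContinuousLinearMap.comp_apply, ContinuousLinearMap.coe_snd']
      exact inner_gradient φ₀ v p.2
    rw [heq]
    simpa [Function.comp_def] using this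
  have h1 := hasFDerivAt_part f1 hf1 a1 δ1 v
  have h2 := hasFDerivAt_part f2 hf2 a2 δ2 v
  have h12 := h1.sub h2
  have heq2 : (((innerSL ℝ (gradX f1 v a1)).comp (snd ℝ ℝ Plane))
        + (fst ℝ ℝ Plane).smulRight ((inner ℝ (gradA f1 v a1) δ1 : ℝ)))
      - (((innerSL ℝ (gradX f2 v a2)).comp (snd ℝ ℝ Plane))
        + (fst ℝ ℝ Plane).smulRight ((inner ℝ (gradA f2 v a2) δ2 : ℝ)))
      = ((innerSL ℝ (gradX f1 v a1 - gradX f2 v a2)).comp (snd ℝ ℝ Plane))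
        + (fst ℝ ℝ Plane).smulRight
            ((inner ℝ (gradA f1 v a1) δ1 : ℝ) - (inner ℝ (gradA f2 v a2) δ2 : ℝ)) := by
    refine ContinuousLinearMap.ext fun p => ?_
    simp [inner_sub_left, smul_eq_mul]
    ring
  rw [heq2] at h12
  exact (hasFDerivAt_fst (p := ((0 : ℝ), v))).prodMk (h0.prodMk h12)

end AuxIFT

section MainIFT
open ContinuousLinearMap

/-- Theorem on boundary vertices of minimization diagrams: if
`φ(v) = 0`, `φ_i(v,a_i) = φ_j(v,a_j)` and the determinant `d` of the matrix with
rows `(∇_xφ_i(v,a_i) − ∇_xφ_j(v,a_j))ᵀ` and `∇φ(v)ᵀ` is nonzero, then for small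
time there is a unique smooth curve `z_v` with `z_v(0) = v` staying on `∂A` along
which the two perturbed values stay equal, and
`z_v′(0) = 𝓜_v(j,i)δa_i + 𝓜_v(i,j)δa_j` where
`𝓜_v(j,i) = (∇φ(v)^⊥ ⊗ ∇_{a_i}φ_i(v,a_i)ᵀ)/d` and
`𝓜_v(i,j) = −(∇φ(v)^⊥ ⊗ ∇_{a_j}φ_j(v,a_j)ᵀ)/d`. -/
theorem statement10 {κ q : ℕ}
    (φ : Fin κ → Plane → Sites q → ℝ) (φ₀ : Plane → ℝ)
    (hφ : ∀ i, ContDiff ℝ (⊤ : ℕ∞) (fun p : Plane × Sites q => φ i p.1 p.2))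
    (hφ₀ : ContDiff ℝ (⊤ : ℕ∞) φ₀)
    (a δa : Fin κ → Sites q)
    (i j : Fin κ) (hij : i ≠ j)
    (v : Plane)
    (hv0 : φ₀ v = 0)
    (hvij : φ i v (a i) = φ j v (a j))
    (d : ℝ)
    (hd : d = Matrix.det
      !![(gradX (φ i) v (a i) - gradX (φ j) v (a j)) 0,
         (gradX (φ i) v (a i) - gradX (φ j) v (a j)) 1;
         gradient φ₀ v 0, gradient φ₀ v 1])
    (hdne : d ≠ 0) :
    ∃ τ₁ > (0:ℝ), ∃ z : ℝ → Plane,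
      (ContDiffOn ℝ (⊤ : ℕ∞) z (Icc 0 τ₁) ∧ z 0 = v ∧
        ∀ t ∈ Icc (0:ℝ) τ₁,
          φ₀ (z t) = 0 ∧
          φ i (z t) (a i + t • δa i) = φ j (z t) (a j + t • δa j)) ∧
      -- uniqueness of the smooth curve on `[0,τ₁]`
      (∀ w : ℝ → Plane,
        (ContDiffOn ℝ (⊤ : ℕ∞) w (Icc 0 τ₁) ∧ w 0 = v ∧
          ∀ t ∈ Icc (0:ℝ) τ₁,
            φ₀ (w t) = 0 ∧
            φ i (w t) (a i + t • δa i) = φ j (w t) (a j + t • δa j)) →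
        EqOn w z (Icc 0 τ₁)) ∧
      -- the derivative formula `z_v′(0) = 𝓜_v(j,i)δa_i + 𝓜_v(i,j)δa_j`
      HasDerivWithinAt z
        (((inner ℝ (gradA (φ i) v (a i)) (δa i) : ℝ) / d) • perp (gradient φ₀ v)
          + (-((inner ℝ (gradA (φ j) v (a j)) (δa j) : ℝ) / d)) •
              perp (gradient φ₀ v))
        (Icc 0 τ₁) 0 := by
  have hn : ((⊤ : ℕ∞) : WithTop ℕ∞) ≠ 0 := by simp
  set g0 : Plane := gradient φ₀ v with hg0def
  set gX : Plane := gradX (φ i) v (a i) - gradX (φ j) v (a j) with hgXdef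
  set c : ℝ := (inner ℝ (gradA (φ i) v (a i)) (δa i) : ℝ)
      - (inner ℝ (gradA (φ j) v (a j)) (δa j) : ℝ) with hcdef
  have hd' : d = gX 0 * g0 1 - gX 1 * g0 0 := by
    rw [hd, Matrix.det_fin_two_of]
  set G : ℝ × Plane → ℝ × (ℝ × ℝ) := fun p =>
    (p.1, (φ₀ p.2, φ i p.2 (a i + p.1 • δa i) - φ j p.2 (a j + p.1 • δa j))) with hGdef
  have hGfd : HasFDerivAt G (myLG g0 gX c) (0, v) :=
    hasFDerivAt_bigG (φ i) (φ j) (hφ i) (hφ j) φ₀ hφ₀ (a i) (a j) (δa i) (δa j) v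
  set eG : (ℝ × Plane) ≃L[ℝ] ℝ × (ℝ × ℝ) :=
    ContinuousLinearEquiv.equivOfInverse (myLG g0 gX c) (myLGinv g0 gX c d)
      (myLG_leftInverse g0 gX c d hd' hdne) (myLG_rightInverse g0 gX c d hd' hdne) with heGdef
  have hGfd' : HasFDerivAt G (eG : (ℝ × Plane) →L[ℝ] ℝ × (ℝ × ℝ)) (0, v) := hGfd
  have hGc : ContDiff ℝ (⊤ : ℕ∞) G := by
    refine contDiff_fst.prodMk ((hφ₀.comp contDiff_snd).prodMk (ContDiff.sub ?_ ?_)) <;>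
      exact (hφ _).comp (contDiff_snd.prodMk (contDiff_const.add (contDiff_fst.smul contDiff_const)))
  set PH : OpenPartialHomeomorph (ℝ × Plane) (ℝ × (ℝ × ℝ)) :=
    hGc.contDiffAt.toOpenPartialHomeomorph G hGfd' hn with hPHdef
  have hPHcoe : ⇑PH = G := rfl
  have hsrc : (0, v) ∈ PH.source :=
    hGc.contDiffAt.mem_toOpenPartialHomeomorph_source hGfd' hn
  -- the set where the derivative of G is invertible
  set S : Set (ℝ × Plane) :=
    {x | IsUnit ((eG.symm : (ℝ × (ℝ × ℝ)) →L[ℝ] ℝ × Plane).comp (fderiv ℝ G x))} with hSdef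
  have hSopen : IsOpen S := by
    have hc : Continuous fun x : ℝ × Plane =>
        (eG.symm : (ℝ × (ℝ × ℝ)) →L[ℝ] ℝ × Plane).comp (fderiv ℝ G x) :=
      continuous_const.clm_comp (hGc.continuous_fderiv hn)
    exact (Units.isOpen (R := (ℝ × Plane) →L[ℝ] ℝ × Plane)).preimage hc
  have hS0 : (0, v) ∈ S := by
    have h1 : fderiv ℝ G (0, v) = (eG : (ℝ × Plane) →L[ℝ] ℝ × (ℝ × ℝ)) := hGfd'.fderiv
    have h2 : ((eG.symm : (ℝ × (ℝ × ℝ)) →L[ℝ] ℝ × Plane).comp (fderiv ℝ G (0, v)))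
        = ContinuousLinearMap.id ℝ (ℝ × Plane) := by
      rw [h1]; exact ContinuousLinearMap.ext fun x => eG.symm_apply_apply x
    show IsUnit _
    rw [h2, ← ContinuousLinearMap.one_def]
    exact isUnit_one
  -- smoothness of the local inverse at points of T₀
  have hsymm_cd : ∀ y : ℝ × (ℝ × ℝ), y ∈ PH.target → PH.symm y ∈ S →
      ContDiffAt ℝ (⊤ : ℕ∞) PH.symm y := by
    intro y hyt hyS
    set x := PH.symm y with hxdef
    have hu : IsUnit ((eG.symm : (ℝ × (ℝ × ℝ)) →L[ℝ] ℝ × Plane).comp (fderiv ℝ G x)) := hyS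
    set ex : (ℝ × Plane) ≃L[ℝ] ℝ × (ℝ × ℝ) :=
      (ContinuousLinearEquiv.ofUnit hu.unit).trans eG with hexdef
    have hfd : HasFDerivAt G (fderiv ℝ G x) x := ((hGc.differentiable hn) x).hasFDerivAt
    have hexeq : (ex : (ℝ × Plane) →L[ℝ] ℝ × (ℝ × ℝ)) = fderiv ℝ G x := by
      refine ContinuousLinearMap.ext fun p => ?_
      show eG (ContinuousLinearEquiv.ofUnit hu.unit p) = fderiv ℝ G x p
      have : ContinuousLinearEquiv.ofUnit hu.unit p
          = ((eG.symm : (ℝ × (ℝ × ℝ)) →L[ℝ] ℝ × Plane).comp (fderiv ℝ G x)) p := by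
        show ((hu.unit : (ℝ × Plane) →L[ℝ] ℝ × Plane)) p = _
        rw [IsUnit.unit_spec]
      rw [this]
      exact eG.apply_symm_apply _
    have hfd' : HasFDerivAt G (ex : (ℝ × Plane) →L[ℝ] ℝ × (ℝ × ℝ)) x := by
      rw [hexeq]; exact hfd
    exact PH.contDiffAt_symm hyt hfd' hGc.contDiffAt
  set T₀ : Set (ℝ × (ℝ × ℝ)) := PH.symm.source ∩ PH.symm ⁻¹' S with hT0def
  have hT0open : IsOpen T₀ := PH.symm.isOpen_inter_preimage hSopen
  have hG0v : G (0, v) = (0, (0, 0)) := by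
    simp only [hGdef, hv0, zero_smul, add_zero]
    exact Prod.ext rfl (Prod.ext rfl (sub_eq_zero_of_eq hvij))
  have hmemT0 : ((0 : ℝ), ((0 : ℝ), (0 : ℝ))) ∈ T₀ := by
    constructor
    · show (0, (0, 0)) ∈ PH.target
      rw [← hG0v, ← hPHcoe]; exact PH.map_source hsrc
    · show PH.symm (0, (0, 0)) ∈ S
      rw [← hG0v]
      have : PH.symm (G (0, v)) = (0, v) := by rw [← hPHcoe]; exact PH.left_inv hsrc
      rw [this]; exact hS0
  set γ : ℝ → ℝ × (ℝ × ℝ) := fun t => (t, (0, 0)) with hγdef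
  have hγcd : ContDiff ℝ (⊤ : ℕ∞) γ := contDiff_id.prodMk contDiff_const
  obtain ⟨ε, hεpos, hball⟩ := Metric.isOpen_iff.1 (hT0open.preimage hγcd.continuous) 0 hmemT0
  set τ₁ : ℝ := ε / 2 with hτdef
  have hτpos : 0 < τ₁ := by positivity
  have hmem : ∀ t ∈ Icc (-τ₁) τ₁, γ t ∈ T₀ := by
    intro t ht
    apply hball
    rw [mem_ball, Real.dist_eq, sub_zero]
    have habs : |t| ≤ τ₁ := abs_le.2 ⟨ht.1, ht.2⟩
    linarith
  have hIccsub : Icc (0 : ℝ) τ₁ ⊆ Icc (-τ₁) τ₁ := Icc_subset_Icc (by linarith) le_rfl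
  set z : ℝ → Plane := fun t => (PH.symm (γ t)).2 with hzdef
  -- key identity
  have hid : ∀ t : ℝ, γ t ∈ T₀ → PH.symm (γ t) = (t, z t) ∧ φ₀ (z t) = 0 ∧
      φ i (z t) (a i + t • δa i) = φ j (z t) (a j + t • δa j) := by
    intro t ht
    have hri : G (PH.symm (γ t)) = γ t := by
      rw [← hPHcoe]; exact PH.right_inv ht.1
    have h1 : (PH.symm (γ t)).1 = t := congrArg Prod.fst hri
    refine ⟨Prod.ext h1 rfl, ?_, ?_⟩
    · have := congrArg (fun y => y.2.1) hri
      simpa [hGdef, hzdef] using this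
    · have := congrArg (fun y => y.2.2) hri
      simp only [hGdef, hγdef] at this
      rw [h1] at this
      exact sub_eq_zero.1 this
  have hz0 : z 0 = v := by
    have : PH.symm (γ 0) = (0, v) := by
      show PH.symm (0, (0, 0)) = (0, v)
      rw [← hG0v, ← hPHcoe]; exact PH.left_inv hsrc
    show (PH.symm (γ 0)).2 = v
    rw [this]
  have hsymmOn : ContDiffOn ℝ (⊤ : ℕ∞) PH.symm T₀ := fun y hy =>
    (hsymm_cd y hy.1 hy.2).contDiffWithinAt
  have hzcd : ContDiffOn ℝ (⊤ : ℕ∞) z (Icc 0 τ₁) := by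
    have h1 : ContDiffOn ℝ (⊤ : ℕ∞) (fun t => PH.symm (γ t)) (Icc 0 τ₁) :=
      hsymmOn.comp hγcd.contDiffOn fun t ht => hmem t (hIccsub ht)
    exact contDiff_snd.comp_contDiffOn h1
  refine ⟨τ₁, hτpos, z, ⟨hzcd, hz0, fun t ht => (hid t (hmem t (hIccsub ht))).2⟩, ?_, ?_⟩
  · -- uniqueness
    rintro w ⟨hwcd, hw0, hwprop⟩
    have hwc : ContinuousOn w (Icc 0 τ₁) := hwcd.continuousOn
    have hzc : ContinuousOn z (Icc 0 τ₁) := hzcd.continuousOn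
    haveI : PreconnectedSpace (Icc (0 : ℝ) τ₁) := Subtype.preconnectedSpace isPreconnected_Icc
    set U : Set (Icc (0 : ℝ) τ₁) := {t | w ↑t = z ↑t} with hUdef
    have hUopen : IsOpen U := by
      refine isOpen_iff_mem_nhds.2 fun t0 ht0 => ?_
      have ht0mem : (t0 : ℝ) ∈ Icc (0 : ℝ) τ₁ := t0.2
      have hsymmsrc : PH.symm (γ ↑t0) ∈ PH.source := PH.map_target (hmem _ (hIccsub ht0mem)).1
      have hzsrc : ((t0 : ℝ), z ↑t0) ∈ PH.source := by
        rw [← (hid ↑t0 (hmem _ (hIccsub ht0mem))).1]; exact hsymmsrc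
      have hwsrc : ((t0 : ℝ), w ↑t0) ∈ PH.source := by
        rw [show w ↑t0 = z ↑t0 from ht0]; exact hzsrc
      have hev1 : ∀ᶠ s in nhdsWithin ↑t0 (Icc (0 : ℝ) τ₁), ((s : ℝ), w s) ∈ PH.source := by
        have hc : ContinuousWithinAt (fun s : ℝ => (s, w s)) (Icc 0 τ₁) ↑t0 :=
          (continuousWithinAt_id.prodMk (hwc ↑t0 ht0mem))
        exact hc.eventually_mem (PH.open_source.mem_nhds hwsrc)
      have hev : ∀ᶠ s in nhdsWithin ↑t0 (Icc (0 : ℝ) τ₁), w s = z s := by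
        filter_upwards [hev1, self_mem_nhdsWithin] with s hs1 hs2
        have hgs := hid s (hmem s (hIccsub hs2))
        have hwz : G (s, w s) = γ s := by
          have hp := hwprop s hs2
          simp only [hGdef, hγdef]
          exact Prod.ext rfl (Prod.ext hp.1 (sub_eq_zero_of_eq hp.2))
        have hzz : G (s, z s) = γ s := by
          rw [← hgs.1, ← hPHcoe]; exact PH.right_inv (hmem s (hIccsub hs2)).1
        have hzsrc' : ((s : ℝ), z s) ∈ PH.source := by
          rw [← hgs.1]; exact PH.map_target (hmem s (hIccsub hs2)).1
        have := PH.injOn hs1 hzsrc' (by rw [hPHcoe, hwz, hzz])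
        exact congrArg Prod.snd this
      rw [nhdsWithin_eq_map_subtype_coe ht0mem] at hev
      exact Filter.mem_map.1 hev
    have hUclosed : IsClosed U :=
      isClosed_eq (hwc.restrict) (hzc.restrict)
    have hUne : U.Nonempty := by
      refine ⟨⟨0, left_mem_Icc.2 hτpos.le⟩, ?_⟩
      show w 0 = z 0
      rw [hw0, hz0]
    have huniv : U = univ := IsClopen.eq_univ ⟨hUclosed, hUopen⟩ hUne
    intro t ht
    have : (⟨t, ht⟩ : Icc (0 : ℝ) τ₁) ∈ U := huniv ▸ mem_univ _
    exact this
  · -- derivative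
    have hsymm0 : ContDiffAt ℝ (⊤ : ℕ∞) PH.symm (γ 0) := by
      have : γ 0 = ((0 : ℝ), ((0 : ℝ), (0 : ℝ))) := rfl
      rw [this]; exact hsymm_cd _ hmemT0.1 hmemT0.2
    have hzcd0 : ContDiffAt ℝ (⊤ : ℕ∞) z 0 :=
      contDiffAt_snd.comp 0 (hsymm0.comp 0 hγcd.contDiffAt)
    have hder : HasDerivAt z (deriv z 0) 0 := (hzcd0.differentiableAt hn).hasDerivAt
    have hcurve : HasDerivAt (fun t : ℝ => (t, z t)) ((1 : ℝ), deriv z 0) 0 :=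
      (hasDerivAt_id (x := (0:ℝ))).prodMk hder
    have hGat : HasFDerivAt G (eG : (ℝ × Plane) →L[ℝ] ℝ × (ℝ × ℝ))
        ((fun t : ℝ => (t, z t)) 0) := by
      simp only [hz0]; exact hGfd'
    have hcomp : HasDerivAt (fun t : ℝ => G (t, z t)) (eG ((1 : ℝ), deriv z 0)) 0 :=
      hGat.comp_hasDerivAt (x := 0) hcurve
    have hEvEq : γ =ᶠ[nhds 0] (fun t : ℝ => G (t, z t)) := by
      have hIoo : Ioo (-τ₁) τ₁ ∈ nhds (0 : ℝ) :=
        isOpen_Ioo.mem_nhds (by constructor <;> [linarith; linarith])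
      filter_upwards [hIoo] with t ht
      have hgs := hid t (hmem t (Ioo_subset_Icc_self ht))
      rw [show G (t, z t) = G (PH.symm (γ t)) by rw [hgs.1], ← hPHcoe]
      exact (PH.right_inv (hmem t (Ioo_subset_Icc_self ht)).1).symm
    have hγd : HasDerivAt γ ((1 : ℝ), ((0 : ℝ), (0 : ℝ))) 0 :=
      (hasDerivAt_id (x := (0:ℝ))).prodMk (hasDerivAt_const 0 _)
    have hγd' : HasDerivAt γ (eG ((1 : ℝ), deriv z 0)) 0 :=
      hcomp.congr_of_eventuallyEq hEvEq
    have huniq : eG ((1 : ℝ), deriv z 0) = ((1 : ℝ), ((0 : ℝ), (0 : ℝ))) :=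
      hγd'.unique hγd
    have hkey : ((1 : ℝ), deriv z 0) = myLGinv g0 gX c d ((1 : ℝ), ((0 : ℝ), (0 : ℝ))) := by
      have := congrArg eG.symm huniq
      rw [eG.symm_apply_apply] at this
      rw [this]
      rfl
    have hderiv_eq : deriv z 0 =
        ((inner ℝ (gradA (φ i) v (a i)) (δa i) : ℝ) / d) • perp g0
          + (-((inner ℝ (gradA (φ j) v (a j)) (δa j) : ℝ) / d)) • perp g0 := by
      have h2 := congrArg Prod.snd hkey
      rw [myLGinv_apply] at h2
      simp only at h2
      rw [h2]
      refine plane_ext ?_ ?_ <;>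
        · simp [perp, hcdef]
          field_simp
          ring
    rw [← hderiv_eq]
    exact hder.hasDerivWithinAt

end MainIFT
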